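/- Let f₁ and f₂ be nonconstant maps in C(Σ, M). Then there exist ε₁ > 0 and ε₂ > 0 and a compact subset K of ℂ not containing 0 such that the set { a ∈ ℂ : a ≠ 0 and there exists h ∈ C(Σ, M) with d(h, f₁) < ε₁ and d(h ∘ g_a, f₂) < ε₂ } is contained in K; in particular this set is precompact in ℂ \ {0}. (Equivalent reformulation (A) of the main properness theorem: the projection to the group of the preimage of a product neighborhood under the total action map is precompact.) -/

import Mathlib

/-!
If `h ≈ f₁` and `h ∘ g_a ≈ f₂`, then `f₁ ∘ g_a ≈ f₂`. Choose nonzero `x, y ∈ ℂ` with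
`f₂ x ≠ f₂ y`; then `f₁(a x)` and `f₁(a y)` must stay apart. This fails both as `a → 0`, where
both points tend to `f₁ 0`, and as `a → ∞`, where both tend to `f₁ ∞`.
-/

open OnePoint

/-- The reparametrization `g_a : Σ → Σ` of the Riemann sphere `Σ = OnePoint ℂ`
extending `z ↦ a · z` on `ℂ` and fixing the point at infinity. -/
noncomputable def gA (a : ℂ) (ha : a ≠ 0) : C(OnePoint ℂ, OnePoint ℂ) where
  toFun := OnePoint.map (fun z => a * z)
  continuous_toFun := (Homeomorph.onePointCongr (Homeomorph.mulLeft₀ a ha)).continuous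

open Filter Topology

theorem Dense.exists_mem_ne_of_continuous {X Y : Type*} [TopologicalSpace X] [TopologicalSpace Y]
    [T2Space Y] {s : Set X} (hs : Dense s) {f : X → Y} (hf : Continuous f)
    (hne : ∃ x y, f x ≠ f y) : ∃ x ∈ s, ∃ y ∈ s, f x ≠ f y := by
  by_contra! hconst
  obtain ⟨x, y, hxy⟩ := hne
  have : Nonempty X := ⟨x⟩
  obtain ⟨p, hp⟩ := hs.nonempty
  have : f = fun _ => f p :=
    hf.ext_on hs continuous_const fun z hz => hconst z hz p hp
  exact hxy (by rw [this])

theorem IsCompact.setOf_le_of_tendsto_cocompact {X : Type*} [TopologicalSpace X] {D : X → ℝ}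
    (hD : Continuous D) (hlim : Tendsto D (cocompact X) (𝓝 0)) {r : ℝ} (hr : 0 < r) :
    IsCompact {a | r ≤ D a} := by
  obtain ⟨t, ht, hsub⟩ := mem_cocompact.1 (hlim (Iio_mem_nhds hr))
  exact ht.of_isClosed_subset (isClosed_le continuous_const hD) fun a (ha : r ≤ D a) =>
    by_contra fun hat => (hsub hat : D a < r).not_ge ha

theorem ContinuousMap.dist_apply_comp_lt {X Y M : Type*} [TopologicalSpace X] [CompactSpace X]
    [TopologicalSpace Y] [CompactSpace Y] [PseudoMetricSpace M] {h f : C(Y, M)} {f' : C(X, M)}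
    {g : C(X, Y)} {ε ε' : ℝ} (hh : dist h f < ε) (hg : dist (h.comp g) f' < ε') (x : X) :
    dist (f (g x)) (f' x) < ε + ε' :=
  calc dist (f (g x)) (f' x) ≤ dist (f (g x)) (h (g x)) + dist (h (g x)) (f' x) :=
        dist_triangle _ _ _
    _ < ε + ε' := by
        rw [dist_comm]
        exact add_lt_add ((h.dist_apply_le_dist (g x)).trans_lt hh)
          ((ContinuousMap.dist_apply_le_dist (f := h.comp g) x).trans_lt hg)

theorem gA_coe (a : ℂ) (ha : a ≠ 0) (z : ℂ) : gA a ha z = ((a * z : ℂ) : OnePoint ℂ) := rfl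

theorem exists_ne_zero_apply_ne {Y : Type*} [TopologicalSpace Y] [T2Space Y]
    (f : C(OnePoint ℂ, Y)) (hf : ∃ x y, f x ≠ f y) :
    ∃ x y : ℂ, x ≠ 0 ∧ y ≠ 0 ∧ f x ≠ f y := by
  have hdense : Dense (((↑) : ℂ → OnePoint ℂ) '' {0}ᶜ) :=
    denseRange_coe.dense_image continuous_coe (dense_compl_singleton 0)
  obtain ⟨_, ⟨x, hx, rfl⟩, _, ⟨y, hy, rfl⟩, hxy⟩ :=
    hdense.exists_mem_ne_of_continuous f.continuous hf
  exact ⟨x, y, hx, hy, hxy⟩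

theorem tendsto_apply_coe_mul_cocompact {Y : Type*} [TopologicalSpace Y] (f : C(OnePoint ℂ, Y))
    {x : ℂ} (hx : x ≠ 0) :
    Tendsto (fun a : ℂ => f ((a * x : ℂ) : OnePoint ℂ)) (cocompact ℂ) (𝓝 (f ∞)) := by
  refine (f.continuous.tendsto ∞).comp (tendsto_coe_infty.comp ?_)
  rw [coclosedCompact_eq_cocompact]
  exact tendsto_cocompact_mul_right₀ hx

theorem isCompact_setOf_le_dist_apply_mul {M : Type*} [PseudoMetricSpace M]
    (f : C(OnePoint ℂ, M)) {x y : ℂ} (hx : x ≠ 0) (hy : y ≠ 0) {r : ℝ} (hr : 0 < r) :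
    IsCompact {a : ℂ | r ≤ dist (f ((a * x : ℂ) : OnePoint ℂ)) (f ((a * y : ℂ) : OnePoint ℂ))} := by
  have hcont (z : ℂ) : Continuous fun a : ℂ => f ((a * z : ℂ) : OnePoint ℂ) :=
    f.continuous.comp (continuous_coe.comp (continuous_mul_const z))
  refine IsCompact.setOf_le_of_tendsto_cocompact ((hcont x).dist (hcont y)) ?_ hr
  simpa using (tendsto_apply_coe_mul_cocompact f hx).dist (tendsto_apply_coe_mul_cocompact f hy)

theorem group_part_precompact_general {M : Type*} [MetricSpace M]
    (f₁ f₂ : C(OnePoint ℂ, M))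
    (hf₂ : ∃ x y, f₂ x ≠ f₂ y) :
    ∃ ε₁ > 0, ∃ ε₂ > 0, ∃ K : Set ℂ, IsCompact K ∧ (0 : ℂ) ∉ K ∧
      {a : ℂ | ∃ ha : a ≠ 0, ∃ h : C(OnePoint ℂ, M),
        dist h f₁ < ε₁ ∧ dist (h.comp (gA a ha)) f₂ < ε₂} ⊆ K := by
  obtain ⟨x, y, hx, hy, hxy⟩ := exists_ne_zero_apply_ne f₂ hf₂
  set c := dist (f₂ x) (f₂ y)
  have hc : 0 < c := dist_pos.2 hxy
  refine ⟨c / 8, by positivity, c / 8, by positivity, _,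
    isCompact_setOf_le_dist_apply_mul f₁ hx hy (half_pos hc), by simpa using half_pos hc, ?_⟩
  rintro a ⟨ha, h, hh, hg⟩
  have hax := ContinuousMap.dist_apply_comp_lt hh hg x
  have hay := ContinuousMap.dist_apply_comp_lt hh hg y
  rw [gA_coe] at hax hay
  have := dist_triangle4 (f₂ x) (f₁ ((a * x : ℂ) : OnePoint ℂ)) (f₁ ((a * y : ℂ) : OnePoint ℂ))
    (f₂ y)
  show c / 2 ≤ _
  linarith [dist_comm (f₂ x) (f₁ ((a * x : ℂ) : OnePoint ℂ))]

/-- Reformulation (A) of the main properness theorem: for nonconstant maps `f₁, f₂` there are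
product neighbourhoods such that the set of group elements carrying the first into the second
is contained in a compact subset of `ℂ* ⊂ ℂ`. -/
theorem group_part_precompact {M : Type*} [MetricSpace M] [CompactSpace M]
    (f₁ f₂ : C(OnePoint ℂ, M))
    (hf₁ : ∃ x y, f₁ x ≠ f₁ y) (hf₂ : ∃ x y, f₂ x ≠ f₂ y) :
    ∃ ε₁ > 0, ∃ ε₂ > 0, ∃ K : Set ℂ, IsCompact K ∧ (0 : ℂ) ∉ K ∧
      {a : ℂ | ∃ ha : a ≠ 0, ∃ h : C(OnePoint ℂ, M),
        dist h f₁ < ε₁ ∧ dist (h.comp (gA a ha)) f₂ < ε₂} ⊆ K :=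
  group_part_precompact_general f₁ f₂ hf₂
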